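/- arXiv:2502.01416 — 4 statements merged into one kernel-verified Lean document; each statement's English description precedes it below -/
import Mathlib

section
/- Let X be a nonempty finite set and N ≥ 1. Let p_0 and p_1 be probability mass functions on X with full support, and let q^ref be a Markov process on X^{N+2} with full support. Suppose q* is a process on X^{N+2} such that: (i) the marginal of q* at time 0 is p_0 and the marginal at time 1 is p_1; (ii) q* is Markov; (iii) q* is reciprocal with respect to q^ref. Then q* is the unique minimizer of KL(q || q^ref) over all processes q ∈ Π_N(p_0, p_1). -/
open Finset

/-- A probability mass function on a finite type. -/
def IsPMF {Z : Type*} [Fintype Z] (p : Z → ℝ) : Prop :=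
  (∀ z, 0 ≤ p z) ∧ ∑ z, p z = 1

/-- KL divergence between two pmfs on a finite type (with `0 log 0 := 0`,
which is automatic since `0 * log (0/b) = 0`). -/
noncomputable def KLd {Z : Type*} [Fintype Z] (a b : Z → ℝ) : ℝ :=
  ∑ z, a z * Real.log (a z / b z)

/-- Trajectories with `N` intermediate time steps: indices `0, 1, …, N+1`,
where index `0` is time `0` and index `N+1` is time `1`. -/
abbrev Traj (X : Type*) (N : ℕ) := Fin (N + 2) → X

variable {X : Type*} [Fintype X] [DecidableEq X] {N : ℕ}

/-- One-time marginal of a process at time index `i`. -/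
noncomputable def timeMarg (q : Traj X N → ℝ) (i : Fin (N + 2)) (x : X) : ℝ :=
  ∑ ω : Traj X N, if ω i = x then q ω else 0

/-- Joint marginal of the endpoints `(x_0, x_1)`. -/
noncomputable def endMarg (q : Traj X N → ℝ) (a b : X) : ℝ :=
  ∑ ω : Traj X N, if ω 0 = a ∧ ω (Fin.last (N + 1)) = b then q ω else 0

/-- Joint marginal at the neighboring time indices `n` and `n+1`. -/
noncomputable def pairMarg (q : Traj X N → ℝ) (n : Fin (N + 1)) (y z : X) : ℝ :=
  ∑ ω : Traj X N, if ω n.castSucc = y ∧ ω n.succ = z then q ω else 0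

/-- Transition probability `q(x_{t_n} = z | x_{t_{n-1}} = y)` for the step from
time index `n` to `n+1`. -/
noncomputable def transP (q : Traj X N → ℝ) (n : Fin (N + 1)) (y z : X) : ℝ :=
  pairMarg q n y z / timeMarg q n.castSucc y

/-- Glue endpoints `a`, `b` and inner states `v` into a trajectory. -/
def glue (a : X) (v : Fin N → X) (b : X) : Traj X N :=
  Fin.cons a (Fin.snoc v b)

/-- The bridge `q(x_in | x_0 = a, x_1 = b)`, as a function of the inner states. -/
noncomputable def bridge (q : Traj X N → ℝ) (a b : X) (v : Fin N → X) : ℝ :=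
  q (glue a v b) / endMarg q a b

/-- A process is Markov if it factorizes through its one-step transitions. -/
def IsMarkov (q : Traj X N → ℝ) : Prop :=
  ∀ ω : Traj X N,
    q ω = timeMarg q 0 (ω 0) * ∏ n : Fin (N + 1), transP q n (ω n.castSucc) (ω n.succ)

/-- A process `q` is reciprocal w.r.t. a full-support reference process `qref` if its
bridges coincide with those of `qref` wherever they are defined. -/
def IsReciprocal (qref q : Traj X N → ℝ) : Prop :=
  ∀ a b : X, 0 < endMarg q a b → ∀ v : Fin N → X, bridge q a b v = bridge qref a b v

/-- Reciprocal projection of `q` w.r.t. `qref`: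
`proj_R(q)(x_0, x_in, x_1) = qref(x_in | x_0, x_1) · q(x_0, x_1)`. -/
noncomputable def projR (qref q : Traj X N → ℝ) (ω : Traj X N) : ℝ :=
  (qref ω / endMarg qref (ω 0) (ω (Fin.last (N + 1)))) *
    endMarg q (ω 0) (ω (Fin.last (N + 1)))

/-- Markovian projection of `q`:
`proj_M(q)(x_0, x_in, x_1) = q(x_0) ∏_{n=1}^{N+1} q(x_{t_n} | x_{t_{n-1}})`. -/
noncomputable def projM (q : Traj X N → ℝ) (ω : Traj X N) : ℝ :=
  timeMarg q 0 (ω 0) * ∏ n : Fin (N + 1), transP q n (ω n.castSucc) (ω n.succ)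

/-- Marginal of the bridge of `q` at time index `i`:
`q(x_{t_i} = y | x_0 = a, x_1 = b)`. -/
noncomputable def bridgeAt (q : Traj X N → ℝ) (i : Fin (N + 2)) (y a b : X) : ℝ :=
  (∑ ω : Traj X N, if ω 0 = a ∧ ω i = y ∧ ω (Fin.last (N + 1)) = b then q ω else 0) /
    endMarg q a b

/-- Conditional transition given the terminal point:
`q(x_{t_n} = z | x_{t_{n-1}} = y, x_1 = b)` for the step from time index `n` to `n+1`. -/
noncomputable def condTrans (q : Traj X N → ℝ) (n : Fin (N + 1)) (y z b : X) : ℝ :=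
  (∑ ω : Traj X N,
      if ω n.castSucc = y ∧ ω n.succ = z ∧ ω (Fin.last (N + 1)) = b then q ω else 0) /
    (∑ ω : Traj X N, if ω n.castSucc = y ∧ ω (Fin.last (N + 1)) = b then q ω else 0)

/-- Membership in `Π_N(p_0, p_1)`: a process with prescribed marginals at times 0 and 1. -/
def InPiN (p0 p1 : X → ℝ) (q : Traj X N → ℝ) : Prop :=
  IsPMF q ∧ (∀ x, timeMarg q 0 x = p0 x) ∧ (∀ x, timeMarg q (Fin.last (N + 1)) x = p1 x)

/-- Membership in `Π(p_0, p_1)`: couplings on `X²` with prescribed marginals. -/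
def InPi2 (p0 p1 : X → ℝ) (s : X × X → ℝ) : Prop :=
  IsPMF s ∧ (∀ a, ∑ b, s (a, b) = p0 a) ∧ (∀ b, ∑ a, s (a, b) = p1 b)

/-!
Reciprocity makes `qs / qref` a function of the endpoints only, and evaluating it along a bridge
that sits at a fixed state `y` at all intermediate times, the Markov factorizations of `qs` and
`qref` split its logarithm as `f x₀ + g x₁` (for `N ≥ 1` the first and the last transitions are
different steps). Hence `KL(q ‖ qref) = KL(q ‖ qs) + ∑ p₀ f + ∑ p₁ g` for every `q ∈ Π_N(p₀, p₁)`,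
and Gibbs' inequality concludes. The positivity of `qs` needed here comes from splicing: each
transition of a trajectory is also a transition of a trajectory of positive mass obtained by
changing one of its endpoints.
-/

open InformationTheory

section KL

variable {Z : Type*} [Fintype Z]

lemma KLd_eq_sum_mul_klFun {a b : Z → ℝ} (hb : ∀ z, b z ≠ 0) (hab : ∑ z, a z = ∑ z, b z) :
    KLd a b = ∑ z, b z * klFun (a z / b z) := by
  have hterm : ∀ z, b z * klFun (a z / b z) = a z * Real.log (a z / b z) + (b z - a z) := by
    intro z
    rw [klFun_apply]
    field_simp [hb z]
    ring
  rw [Finset.sum_congr rfl fun z _ => hterm z, Finset.sum_add_distrib, Finset.sum_sub_distrib,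
    hab, sub_self, add_zero, KLd]

lemma KLd_nonneg {a b : Z → ℝ} (ha : IsPMF a) (hb : IsPMF b) (hbpos : ∀ z, 0 < b z) :
    0 ≤ KLd a b := by
  rw [KLd_eq_sum_mul_klFun (fun z => (hbpos z).ne') (ha.2.trans hb.2.symm)]
  exact Finset.sum_nonneg fun z _ =>
    mul_nonneg (hbpos z).le (klFun_nonneg (div_nonneg (ha.1 z) (hbpos z).le))

lemma eq_of_KLd_eq_zero {a b : Z → ℝ} (ha : IsPMF a) (hb : IsPMF b) (hbpos : ∀ z, 0 < b z)
    (h : KLd a b = 0) : a = b := by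
  have hterm : ∀ z ∈ Finset.univ, 0 ≤ b z * klFun (a z / b z) := fun z _ =>
    mul_nonneg (hbpos z).le (klFun_nonneg (div_nonneg (ha.1 z) (hbpos z).le))
  rw [KLd_eq_sum_mul_klFun (fun z => (hbpos z).ne') (ha.2.trans hb.2.symm),
    Finset.sum_eq_zero_iff_of_nonneg hterm] at h
  funext z
  have hz := (mul_eq_zero.mp (h z (Finset.mem_univ z))).resolve_left (hbpos z).ne'
  rwa [klFun_eq_zero_iff (div_nonneg (ha.1 z) (hbpos z).le), div_eq_one_iff_eq (hbpos z).ne']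
    at hz

lemma KLd_self (a : Z → ℝ) : KLd a a = 0 :=
  Finset.sum_eq_zero fun z _ => by
    rcases eq_or_ne (a z) 0 with h | h <;> simp [h]

lemma KLd_eq_KLd_add {a b c : Z → ℝ} (hb : ∀ z, b z ≠ 0) (hc : ∀ z, c z ≠ 0) :
    KLd a c = KLd a b + ∑ z, a z * Real.log (b z / c z) := by
  rw [KLd, KLd, ← Finset.sum_add_distrib]
  refine Finset.sum_congr rfl fun z _ => ?_
  rcases eq_or_ne (a z) 0 with h | h
  · simp [h]
  · rw [← mul_add, Real.log_div h (hc z), Real.log_div h (hb z), Real.log_div (hb z) (hc z)]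
    ring

end KL

section Glue

omit [Fintype X] [DecidableEq X]

lemma glue_zero (a : X) (v : Fin N → X) (b : X) : glue a v b 0 = a := rfl

lemma glue_last (a : X) (v : Fin N → X) (b : X) : glue a v b (Fin.last (N + 1)) = b := by
  rw [← Fin.succ_last]
  simp only [glue, Fin.cons_succ, Fin.snoc_last]

lemma exists_glue_eq (ω : Traj X N) : ∃ v, glue (ω 0) v (ω (Fin.last (N + 1))) = ω := by
  refine ⟨Fin.init (Fin.tail ω), ?_⟩
  have hlast : ω (Fin.last (N + 1)) = Fin.tail ω (Fin.last N) := by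
    rw [Fin.tail, Fin.succ_last]
  rw [hlast, glue, Fin.snoc_init_self, Fin.cons_self_tail]

lemma glue_apply_of_ne_last (a : X) (v : Fin N → X) (b b' : X) {i : Fin (N + 2)}
    (hi : i ≠ Fin.last (N + 1)) : glue a v b i = glue a v b' i := by
  induction i using Fin.cases with
  | zero => rfl
  | succ k =>
    obtain ⟨m, rfl⟩ :=
      Fin.exists_castSucc_eq.mpr fun h : k = Fin.last N => hi (by rw [h, Fin.succ_last])
    simp [glue]

lemma glue_apply_of_ne_zero (a a' : X) (v : Fin N → X) (b : X) {i : Fin (N + 2)}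
    (hi : i ≠ 0) : glue a v b i = glue a' v b i := by
  obtain ⟨k, rfl⟩ := Fin.exists_succ_eq.mpr hi
  simp [glue]

lemma glue_const_castSucc (a y b : X) (n : Fin (N + 1)) :
    glue a (fun _ => y) b n.castSucc = if n = 0 then a else y := by
  rcases Fin.eq_zero_or_eq_succ n with rfl | ⟨m, rfl⟩
  · simp [glue]
  · rw [← Fin.succ_castSucc]
    simp [glue, Fin.succ_ne_zero]

lemma glue_const_succ (a y b : X) (n : Fin (N + 1)) :
    glue a (fun _ => y) b n.succ = if n = Fin.last N then b else y := by
  rcases Fin.eq_castSucc_or_eq_last n with ⟨m, rfl⟩ | rfl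
  · simp [glue, (Fin.castSucc_lt_last m).ne]
  · rw [Fin.succ_last, glue_last]
    simp

end Glue

section Marginals

variable {q : Traj X N → ℝ}

lemma le_timeMarg (hq : ∀ ω, 0 ≤ q ω) (ω : Traj X N) (i : Fin (N + 2)) :
    q ω ≤ timeMarg q i (ω i) := by
  simpa [timeMarg] using Finset.single_le_sum
    (f := fun σ : Traj X N => if σ i = ω i then q σ else 0)
    (fun σ _ => by split <;> simp [hq σ]) (Finset.mem_univ ω)

lemma le_pairMarg (hq : ∀ ω, 0 ≤ q ω) (ω : Traj X N) (n : Fin (N + 1)) :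
    q ω ≤ pairMarg q n (ω n.castSucc) (ω n.succ) := by
  simpa [pairMarg] using Finset.single_le_sum
    (f := fun σ : Traj X N =>
      if σ n.castSucc = ω n.castSucc ∧ σ n.succ = ω n.succ then q σ else 0)
    (fun σ _ => by split <;> simp [hq σ]) (Finset.mem_univ ω)

lemma le_endMarg (hq : ∀ ω, 0 ≤ q ω) (ω : Traj X N) :
    q ω ≤ endMarg q (ω 0) (ω (Fin.last (N + 1))) := by
  simpa [endMarg] using Finset.single_le_sum
    (f := fun σ : Traj X N =>
      if σ 0 = ω 0 ∧ σ (Fin.last (N + 1)) = ω (Fin.last (N + 1)) then q σ else 0)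
    (fun σ _ => by split <;> simp [hq σ]) (Finset.mem_univ ω)

lemma exists_pos_of_timeMarg_pos {i : Fin (N + 2)} {x : X}
    (h : 0 < timeMarg q i x) : ∃ ω : Traj X N, ω i = x ∧ 0 < q ω := by
  by_contra! hc
  refine h.not_ge (Finset.sum_nonpos fun ω _ => ?_)
  split_ifs with hω
  exacts [hc ω hω, le_rfl]

lemma sum_mul_apply_eq_sum_timeMarg_mul (q : Traj X N → ℝ) (i : Fin (N + 2)) (L : X → ℝ) :
    ∑ ω : Traj X N, q ω * L (ω i) = ∑ x, timeMarg q i x * L x := by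
  simp only [timeMarg, Finset.sum_mul, ite_mul, zero_mul]
  rw [Finset.sum_comm]
  simp

lemma endMarg_pos (hq : ∀ ω, 0 < q ω) (a b : X) : 0 < endMarg q a b := by
  simpa [glue_zero, glue_last] using
    (hq (glue a (fun _ => a) b)).trans_le (le_endMarg (fun ω => (hq ω).le) _)

lemma transP_pos (hq : ∀ ω, 0 ≤ q ω) {σ : Traj X N} (hσ : 0 < q σ) (n : Fin (N + 1)) :
    0 < transP q n (σ n.castSucc) (σ n.succ) :=
  div_pos (hσ.trans_le (le_pairMarg hq σ n)) (hσ.trans_le (le_timeMarg hq σ n.castSucc))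

end Marginals

namespace IsMarkov

variable {q : Traj X N → ℝ}

lemma pos_of_forall_step (hq : ∀ ω, 0 ≤ q ω) (hM : IsMarkov q) {ω : Traj X N}
    (h0 : 0 < timeMarg q 0 (ω 0))
    (hstep : ∀ n : Fin (N + 1),
      ∃ σ, 0 < q σ ∧ σ n.castSucc = ω n.castSucc ∧ σ n.succ = ω n.succ) :
    0 < q ω := by
  rw [hM ω]
  refine mul_pos h0 (Finset.prod_pos fun n _ => ?_)
  obtain ⟨σ, hσ, hcast, hsucc⟩ := hstep n
  rw [← hcast, ← hsucc]
  exact transP_pos hq hσ n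

lemma exists_glue_const_eq_mul (hN : 1 ≤ N) (hM : IsMarkov q) (y : X) :
    ∃ A B : X → ℝ, ∀ a b, q (glue a (fun _ => y) b) = A a * B b := by
  have hlast : (0 : Fin (N + 1)) ≠ Fin.last N := by
    simp [Fin.ext_iff]
    omega
  refine ⟨fun a => timeMarg q 0 a * transP q 0 a y,
    fun b => ∏ n ∈ Finset.univ.erase 0, transP q n y (if n = Fin.last N then b else y),
    fun a b => ?_⟩
  rw [hM, glue_zero, ← Finset.mul_prod_erase _ _ (Finset.mem_univ 0), mul_assoc]
  simp only [glue_const_castSucc, glue_const_succ, if_pos, if_neg hlast]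
  congr 2
  exact Finset.prod_congr rfl fun n hn => by rw [if_neg (Finset.ne_of_mem_erase hn)]

lemma exists_log_div_glue_const_eq_add (hN : 1 ≤ N) {p : Traj X N → ℝ} (hpM : IsMarkov p)
    (hqM : IsMarkov q) (hp : ∀ ω, p ω ≠ 0) (hq : ∀ ω, q ω ≠ 0) (y : X) :
    ∃ f g : X → ℝ, ∀ a b,
      Real.log (p (glue a (fun _ => y) b) / q (glue a (fun _ => y) b)) = f a + g b := by
  obtain ⟨A, B, hAB⟩ := hpM.exists_glue_const_eq_mul hN y
  obtain ⟨A', B', hAB'⟩ := hqM.exists_glue_const_eq_mul hN y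
  refine ⟨fun a => Real.log (A a) - Real.log (A' a),
    fun b => Real.log (B b) - Real.log (B' b), fun a b => ?_⟩
  have hne := hp (glue a (fun _ => y) b)
  have hne' := hq (glue a (fun _ => y) b)
  rw [hAB] at hne ⊢
  rw [hAB'] at hne' ⊢
  rw [Real.log_div hne hne', Real.log_mul (left_ne_zero_of_mul hne) (right_ne_zero_of_mul hne),
    Real.log_mul (left_ne_zero_of_mul hne') (right_ne_zero_of_mul hne')]
  ring

end IsMarkov

namespace IsReciprocal

variable {qref qs : Traj X N → ℝ}

lemma glue_div_eq (hR : IsReciprocal qref qs) (hqref : ∀ ω, 0 < qref ω) {a b : X}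
    (hE : 0 < endMarg qs a b) (v : Fin N → X) :
    qs (glue a v b) / qref (glue a v b) = endMarg qs a b / endMarg qref a b := by
  have hEref := endMarg_pos hqref a b
  have h := hR a b hE v
  rw [bridge, bridge, div_eq_div_iff hE.ne' hEref.ne'] at h
  rw [div_eq_div_iff (hqref _).ne' hEref.ne', h, mul_comm]

lemma glue_pos (hR : IsReciprocal qref qs) (hqref : ∀ ω, 0 < qref ω) {a b : X}
    (hE : 0 < endMarg qs a b) (v : Fin N → X) : 0 < qs (glue a v b) := by
  have h : 0 < qs (glue a v b) / qref (glue a v b) :=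
    hR.glue_div_eq hqref hE v ▸ div_pos hE (endMarg_pos hqref a b)
  exact (div_pos_iff_of_pos_right (hqref _)).mp h

lemma pos_of_isMarkov (hN : 1 ≤ N) (hR : IsReciprocal qref qs) (hqs : ∀ ω, 0 ≤ qs ω)
    (hqref : ∀ ω, 0 < qref ω) (hM : IsMarkov qs) (h0 : ∀ x, 0 < timeMarg qs 0 x)
    (h1 : ∀ x, 0 < timeMarg qs (Fin.last (N + 1)) x) (ω : Traj X N) : 0 < qs ω := by
  have hout : ∀ a, ∃ b, 0 < endMarg qs a b := fun a => by
    obtain ⟨σ, rfl, hσ⟩ := exists_pos_of_timeMarg_pos (h0 a)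
    exact ⟨_, hσ.trans_le (le_endMarg hqs σ)⟩
  have hin : ∀ b, ∃ a, 0 < endMarg qs a b := fun b => by
    obtain ⟨σ, rfl, hσ⟩ := exists_pos_of_timeMarg_pos (h1 b)
    exact ⟨_, hσ.trans_le (le_endMarg hqs σ)⟩
  suffices h : ∀ a v b, 0 < qs (glue a v b) by
    obtain ⟨v, hv⟩ := exists_glue_eq ω
    exact hv ▸ h _ v _
  intro a v b
  refine hM.pos_of_forall_step hqs (h0 a) fun n => ?_
  by_cases hn : n = Fin.last N
  · obtain ⟨a', ha'⟩ := hin b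
    have hcast : n.castSucc ≠ 0 := by
      rw [hn]
      simp [Fin.ext_iff]
      omega
    exact ⟨glue a' v b, hR.glue_pos hqref ha' v, glue_apply_of_ne_zero _ _ _ _ hcast,
      glue_apply_of_ne_zero _ _ _ _ (Fin.succ_ne_zero n)⟩
  · obtain ⟨b', hb'⟩ := hout a
    have hsucc : n.succ ≠ Fin.last (N + 1) := fun h =>
      hn (Fin.succ_injective _ (h.trans (Fin.succ_last N).symm))
    exact ⟨glue a v b', hR.glue_pos hqref hb' v,
      glue_apply_of_ne_last _ _ _ _ (Fin.castSucc_lt_last n).ne,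
      glue_apply_of_ne_last _ _ _ _ hsucc⟩

lemma exists_log_div_eq_add [Nonempty X] (hN : 1 ≤ N) (hR : IsReciprocal qref qs)
    (hqsM : IsMarkov qs) (hqrefM : IsMarkov qref) (hqs : ∀ ω, 0 < qs ω)
    (hqref : ∀ ω, 0 < qref ω) :
    ∃ f g : X → ℝ, ∀ ω : Traj X N,
      Real.log (qs ω / qref ω) = f (ω 0) + g (ω (Fin.last (N + 1))) := by
  let y : X := Classical.arbitrary X
  obtain ⟨f, g, hfg⟩ := hqsM.exists_log_div_glue_const_eq_add hN hqrefM
    (fun ω => (hqs ω).ne') (fun ω => (hqref ω).ne') y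
  refine ⟨f, g, fun ω => ?_⟩
  obtain ⟨v, hv⟩ := exists_glue_eq ω
  have hE := endMarg_pos hqs (ω 0) (ω (Fin.last (N + 1)))
  conv_lhs => rw [← hv]
  rw [hR.glue_div_eq hqref hE v, ← hR.glue_div_eq hqref hE (fun _ => y), hfg]

end IsReciprocal

lemma KLd_eq_KLd_add_of_log_div_eq_add {q qs qref : Traj X N → ℝ} (hqs : ∀ ω, qs ω ≠ 0)
    (hqref : ∀ ω, qref ω ≠ 0) {f g : X → ℝ}
    (hfg : ∀ ω, Real.log (qs ω / qref ω) = f (ω 0) + g (ω (Fin.last (N + 1)))) :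
    KLd q qref = KLd q qs +
      (∑ x, timeMarg q 0 x * f x + ∑ x, timeMarg q (Fin.last (N + 1)) x * g x) := by
  rw [KLd_eq_KLd_add hqs hqref, ← sum_mul_apply_eq_sum_timeMarg_mul q 0 f,
    ← sum_mul_apply_eq_sum_timeMarg_mul q (Fin.last (N + 1)) g, ← Finset.sum_add_distrib]
  simp only [hfg, mul_add]

theorem sb_characterization_general
    {X : Type*} [Fintype X] [DecidableEq X] [Nonempty X] {N : ℕ} (hN : 1 ≤ N)
    (p0 p1 : X → ℝ) (hp0pos : ∀ x, 0 < p0 x)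
    (hp1pos : ∀ x, 0 < p1 x)
    (qref : Traj X N → ℝ) (hqrefpos : ∀ ω, 0 < qref ω)
    (hqrefM : IsMarkov qref)
    (qs : Traj X N → ℝ) (hqs : IsPMF qs)
    (hqs0 : ∀ x, timeMarg qs 0 x = p0 x)
    (hqs1 : ∀ x, timeMarg qs (Fin.last (N + 1)) x = p1 x)
    (hqsM : IsMarkov qs) (hqsR : IsReciprocal qref qs) :
    (∀ q : Traj X N → ℝ, InPiN p0 p1 q → KLd qs qref ≤ KLd q qref) ∧
    (∀ q : Traj X N → ℝ, InPiN p0 p1 q → KLd q qref = KLd qs qref → q = qs) := by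
  have hqs_pos : ∀ ω, 0 < qs ω := hqsR.pos_of_isMarkov hN hqs.1 hqrefpos hqsM
    (fun x => hqs0 x ▸ hp0pos x) (fun x => hqs1 x ▸ hp1pos x)
  obtain ⟨f, g, hfg⟩ := hqsR.exists_log_div_eq_add hN hqsM hqrefM hqs_pos hqrefpos
  set C := ∑ x, p0 x * f x + ∑ x, p1 x * g x
  have hpythagoras : ∀ q, InPiN p0 p1 q → KLd q qref = KLd q qs + C := by
    rintro q ⟨-, hq0, hq1⟩
    simp only [KLd_eq_KLd_add_of_log_div_eq_add (fun ω => (hqs_pos ω).ne')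
      (fun ω => (hqrefpos ω).ne') hfg, hq0, hq1, C]
  have hC : KLd qs qref = C := by
    rw [hpythagoras qs ⟨hqs, hqs0, hqs1⟩, KLd_self, zero_add]
  refine ⟨fun q hq => ?_, fun q hq hKL => ?_⟩
  · linarith [hpythagoras q hq, KLd_nonneg hq.1 hqs hqs_pos]
  · exact eq_of_KLd_eq_zero hq.1 hqs hqs_pos (by linarith [hpythagoras q hq])

/-- Characterization of the dynamic SB solution on a discrete space
with a Markovian reference. If `q*` has marginals `p_0`, `p_1` at times 0 and 1 and is
both Markov and reciprocal w.r.t. the full-support Markov reference `q^ref`, then `q*`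
is the unique minimizer of `KL(q ‖ q^ref)` over `Π_N(p_0, p_1)`. -/
theorem sb_characterization
    {X : Type*} [Fintype X] [DecidableEq X] [Nonempty X] {N : ℕ} (hN : 1 ≤ N)
    (p0 p1 : X → ℝ) (hp0 : IsPMF p0) (hp0pos : ∀ x, 0 < p0 x)
    (hp1 : IsPMF p1) (hp1pos : ∀ x, 0 < p1 x)
    (qref : Traj X N → ℝ) (hqref : IsPMF qref) (hqrefpos : ∀ ω, 0 < qref ω)
    (hqrefM : IsMarkov qref)
    (qs : Traj X N → ℝ) (hqs : IsPMF qs)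
    (hqs0 : ∀ x, timeMarg qs 0 x = p0 x)
    (hqs1 : ∀ x, timeMarg qs (Fin.last (N + 1)) x = p1 x)
    (hqsM : IsMarkov qs) (hqsR : IsReciprocal qref qs) :
    (∀ q : Traj X N → ℝ, InPiN p0 p1 q → KLd qs qref ≤ KLd q qref) ∧
    (∀ q : Traj X N → ℝ, InPiN p0 p1 q → KLd q qref = KLd qs qref → q = qs) :=
  sb_characterization_general hN p0 p1 hp0pos hp1pos qref hqrefpos hqrefM qs hqs hqs0 hqs1 hqsM hqsR
end

section
/- Let X be a nonempty finite set, N ≥ 1, and let q be a process on X^{N+2} with full support. Set m := proj_M(q), the Markovian projection of q. Then: (i) m is a Markov process; (ii) m has the same one-time marginals as q, i.e. m(x_{t_n}) = q(x_{t_n}) for every n ∈ {0, 1, …, N+1}; and (iii) m has the same joint distributions at neighboring time moments as q, i.e. m(x_{t_{n-1}}, x_{t_n}) = q(x_{t_{n-1}}, x_{t_n}) for every n ∈ {1, …, N+1}. -/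
open Finset

variable {X : Type*} [Fintype X] [DecidableEq X] {N : ℕ}

/-!
The Markovian projection is the Markov chain started at the law of `x_0` whose kernels are the
one-step transitions `T_n = q(x_{t_{n+1}} | x_{t_n})` of `q`. Full support makes every one-time
marginal `μ_n` of `q` positive, so the `T_n` are stochastic, and `μ_n T_n = μ_{n+1}`. Peeling off
the last step shows by induction that the chain's marginal at its final time is `μ`, and then
that its marginal at times `(n, n+1)` is `μ_n(y) T_n(y, z) = q(y, z)`; summing these out gives
every one-time marginal. As the transitions of a process are determined by these two kinds of
marginals, the chain has the same transitions as `q`, hence is Markov.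
-/

section MarkovChain

variable {k : ℕ}

noncomputable def markovChain (μ₀ : X → ℝ) (T : Fin k → X → X → ℝ) (σ : Fin (k + 1) → X) : ℝ :=
  μ₀ (σ 0) * ∏ n, T n (σ n.castSucc) (σ n.succ)

omit [Fintype X] [DecidableEq X] in
theorem markovChain_snoc (μ₀ : X → ℝ) (T : Fin (k + 1) → X → X → ℝ) (τ : Fin (k + 1) → X)
    (x : X) :
    markovChain μ₀ T (Fin.snoc τ x) =
      markovChain μ₀ (fun n => T n.castSucc) τ * T (Fin.last k) (τ (Fin.last k)) x := by
  simp only [markovChain, Fin.prod_univ_castSucc, Fin.succ_castSucc, Fin.snoc_castSucc,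
    Fin.succ_last, Fin.snoc_last, mul_assoc]
  rfl

omit [DecidableEq X] in
theorem sum_pi_fin_snoc (g : (Fin (k + 2) → X) → ℝ) :
    ∑ σ, g σ = ∑ τ : Fin (k + 1) → X, ∑ x, g (Fin.snoc τ x) := by
  rw [← (Fin.snocEquiv fun _ => X).sum_comp, Fintype.sum_prod_type, Finset.sum_comm]
  rfl

variable (μ : Fin (k + 1) → X → ℝ) (T : Fin k → X → X → ℝ)

theorem markovChain_marginal_last
    (hμ : ∀ n z, ∑ y, μ n.castSucc y * T n y z = μ n.succ z) (x : X) :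
    ∑ σ, (if σ (Fin.last k) = x then markovChain (μ 0) T σ else 0) = μ (Fin.last k) x := by
  induction k generalizing x with
  | zero =>
    rw [← (Equiv.funUnique (Fin 1) X).symm.sum_comp]
    simp [markovChain, Fin.last_zero, Equiv.funUnique]
  | succ k ih =>
    have hμ' : ∀ (n : Fin k) z, ∑ y, μ n.castSucc.castSucc y * T n.castSucc y z =
        μ n.castSucc.succ z := fun n z => by rw [hμ, Fin.succ_castSucc]
    calc ∑ σ, (if σ (Fin.last (k + 1)) = x then markovChain (μ 0) T σ else 0)
        = ∑ y, (∑ τ, if τ (Fin.last k) = y then markovChain (μ 0) (fun n => T n.castSucc) τ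
            else 0) * T (Fin.last k) y x := by
          simp only [Finset.sum_mul, ite_mul, zero_mul]
          rw [Finset.sum_comm]
          simp only [sum_pi_fin_snoc, Fin.snoc_last, markovChain_snoc, Finset.sum_ite_eq,
            Finset.sum_ite_eq', Finset.mem_univ, if_true]
      _ = μ (Fin.last (k + 1)) x := by
          have ih' := ih (fun i => μ i.castSucc) _ hμ'
          simp only [Fin.castSucc_zero] at ih'
          simp only [ih', ← Fin.succ_last, ← hμ]

theorem markovChain_pairMarginal (hT : ∀ n y, ∑ z, T n y z = 1)
    (hμ : ∀ n z, ∑ y, μ n.castSucc y * T n y z = μ n.succ z) (n : Fin k) (y z : X) :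
    ∑ σ, (if σ n.castSucc = y ∧ σ n.succ = z then markovChain (μ 0) T σ else 0) =
      μ n.castSucc y * T n y z := by
  induction k with
  | zero => exact n.elim0
  | succ k ih =>
    have hμ' : ∀ (n : Fin k) z, ∑ y, μ n.castSucc.castSucc y * T n.castSucc y z =
        μ n.castSucc.succ z := fun n z => by rw [hμ, Fin.succ_castSucc]
    induction n using Fin.lastCases with
    | last =>
      have hlast := markovChain_marginal_last (fun i => μ i.castSucc) _ hμ'
      simp only [Fin.castSucc_zero] at hlast
      rw [← hlast, Finset.sum_mul, sum_pi_fin_snoc]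
      refine Finset.sum_congr rfl fun τ _ => ?_
      by_cases hy : τ (Fin.last k) = y <;>
        simp [hy, Fin.succ_last, Fin.snoc_castSucc, Fin.snoc_last, markovChain_snoc]
    | cast n =>
      have ih' := ih (fun i => μ i.castSucc) _ (fun n y => hT n.castSucc y) hμ' n
      simp only [Fin.castSucc_zero] at ih'
      rw [← ih', sum_pi_fin_snoc]
      refine Finset.sum_congr rfl fun τ _ => ?_
      simp only [Fin.succ_castSucc, Fin.snoc_castSucc, markovChain_snoc]
      split_ifs <;> simp [← Finset.mul_sum, hT]

end MarkovChain

section Marginals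

variable (q : Traj X N → ℝ)

theorem projM_eq_markovChain : projM q = markovChain (timeMarg q 0) (transP q) := rfl

theorem sum_pairMarg_right (n : Fin (N + 1)) (y : X) :
    ∑ z, pairMarg q n y z = timeMarg q n.castSucc y := by
  unfold pairMarg timeMarg
  rw [Finset.sum_comm]
  refine Finset.sum_congr rfl fun ω _ => ?_
  by_cases h : ω n.castSucc = y <;> simp [h]

theorem sum_pairMarg_left (n : Fin (N + 1)) (z : X) :
    ∑ y, pairMarg q n y z = timeMarg q n.succ z := by
  unfold pairMarg timeMarg
  rw [Finset.sum_comm]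
  refine Finset.sum_congr rfl fun ω _ => ?_
  by_cases h : ω n.succ = z <;> simp [h]

theorem timeMarg_eq_of_pairMarg_eq {p : Traj X N → ℝ} (h : pairMarg p = pairMarg q)
    (i : Fin (N + 2)) : timeMarg p i = timeMarg q i := by
  funext x
  induction i using Fin.lastCases with
  | last => rw [← Fin.succ_last, ← sum_pairMarg_left, ← sum_pairMarg_left, h]
  | cast n => rw [← sum_pairMarg_right, ← sum_pairMarg_right, h]

variable {q} (hq : ∀ ω, 0 < q ω)
include hq

theorem timeMarg_pos (i : Fin (N + 2)) (x : X) : 0 < timeMarg q i x :=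
  Finset.sum_pos' (fun ω _ => by split_ifs <;> simp [(hq ω).le])
    ⟨fun _ => x, Finset.mem_univ _, by simpa using hq _⟩

theorem sum_transP (n : Fin (N + 1)) (y : X) : ∑ z, transP q n y z = 1 := by
  simp only [transP]
  rw [← Finset.sum_div, sum_pairMarg_right, div_self (timeMarg_pos hq _ _).ne']

theorem timeMarg_mul_transP (n : Fin (N + 1)) (y z : X) :
    timeMarg q n.castSucc y * transP q n y z = pairMarg q n y z :=
  mul_div_cancel₀ _ (timeMarg_pos hq _ _).ne'

theorem pairMarg_projM : pairMarg (projM q) = pairMarg q := by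
  funext n y z
  rw [← timeMarg_mul_transP hq, pairMarg, projM_eq_markovChain]
  refine markovChain_pairMarginal (timeMarg q) (transP q) (sum_transP hq) (fun n z => ?_) n y z
  simp only [timeMarg_mul_transP hq, sum_pairMarg_left]

end Marginals

theorem markov_proj_properties_general
    {X : Type*} [Fintype X] [DecidableEq X] {N : ℕ}
    (q : Traj X N → ℝ) (hqpos : ∀ ω, 0 < q ω) :
    IsMarkov (projM q) ∧
    (∀ (i : Fin (N + 2)) (x : X), timeMarg (projM q) i x = timeMarg q i x) ∧
    (∀ (n : Fin (N + 1)) (y z : X), pairMarg (projM q) n y z = pairMarg q n y z) := by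
  have hpair := pairMarg_projM hqpos
  have htime := timeMarg_eq_of_pairMarg_eq q hpair
  have htrans : transP (projM q) = transP q := by
    funext n y z
    rw [transP, transP, hpair, htime]
  refine ⟨fun ω => ?_, fun i x => by rw [htime], fun n y z => by rw [hpair]⟩
  rw [htime, htrans]
  rfl

/-- Properties of the Markovian projection. For a full-support process
`q`, the Markovian projection `m = proj_M(q)`: (i) is Markov; (ii) has the same one-time
marginals as `q`; (iii) has the same joint distributions at neighboring time moments. -/
theorem markov_proj_properties
    {X : Type*} [Fintype X] [DecidableEq X] [Nonempty X] {N : ℕ} (hN : 1 ≤ N)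
    (q : Traj X N → ℝ) (hq : IsPMF q) (hqpos : ∀ ω, 0 < q ω) :
    IsMarkov (projM q) ∧
    (∀ (i : Fin (N + 2)) (x : X), timeMarg (projM q) i x = timeMarg q i x) ∧
    (∀ (n : Fin (N + 1)) (y z : X), pairMarg (projM q) n y z = pairMarg q n y z) :=
  markov_proj_properties_general q hqpos
end

section
/- Let X be a nonempty finite set, N ≥ 1, and let q^ref be a Markov process on X^{N+2} with full support. Let q be a process on X^{N+2} with full support that is both Markov and reciprocal with respect to q^ref. Then there exist strictly positive functions ψ, φ : X → (0, ∞) such that q(x_0, x_1) = ψ(x_0) · q^ref(x_1 | x_0) · φ(x_1) for all x_0, x_1 ∈ X, where q(x_0, x_1) is the endpoint marginal of q and q^ref(x_1 | x_0) is the conditional of the endpoint marginal of q^ref. -/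
open Finset

variable {X : Type*} [Fintype X] [DecidableEq X] {N : ℕ}

/-! For `N ≥ 1` the first and the last transition of a trajectory are different factors, so
the Markov property splits every trajectory weight as `f(x_0, x_in) · g(x_in, x_1)`.
Reciprocity says that `q(x_0, x_1) / q^ref(x_0, x_1) = q(ω) / q^ref(ω)` for every trajectory `ω`
with these endpoints; freezing `x_in`, the ratio is a product of a function of `x_0` and a
function of `x_1`, which full support lets us take positive. The row sums of `q^ref(x_0, ·)`
are then absorbed into `ψ`. -/

theorem IsMarkov.exists_glue_eq_mul {p : Traj X N → ℝ} (hp : IsMarkov p) (hN : 1 ≤ N) :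
    ∃ (f : X → (Fin N → X) → ℝ) (g : (Fin N → X) → X → ℝ),
      ∀ a v b, p (glue a v b) = f a v * g v b := by
  obtain ⟨M, rfl⟩ : ∃ M, N = M + 1 := ⟨N - 1, by omega⟩
  refine ⟨fun a v => timeMarg p 0 a * transP p 0 a (v 0),
    fun v b => let w : Fin (M + 2) → X := Fin.snoc v b
      ∏ k : Fin (M + 1), transP p k.succ (w k.castSucc) (w k.succ),
    fun a v b => ?_⟩
  have h1 : glue a v b 1 = v 0 := Fin.snoc_castSucc (α := fun _ => X) b v 0
  have hsucc (k : Fin (M + 1)) :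
      glue a v b k.succ.castSucc = Fin.snoc (α := fun _ => X) v b k.castSucc := by
    rw [← Fin.succ_castSucc]; rfl
  rw [hp, Fin.prod_univ_succ, Fin.castSucc_zero, Fin.succ_zero_eq_one, h1]
  simp only [hsucc]
  simp only [glue, Fin.cons_zero, Fin.cons_succ, mul_assoc]

theorem endMarg_pos_s11 [Nonempty X] {p : Traj X N → ℝ} (hp : ∀ ω, 0 < p ω) (a b : X) :
    0 < endMarg p a b := by
  let v : Fin N → X := fun _ => Classical.arbitrary X
  refine sum_pos' (fun ω _ => ?_) ⟨glue a v b, mem_univ _, ?_⟩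
  · split_ifs
    exacts [(hp ω).le, le_rfl]
  · have hlast : glue a v b (Fin.last (N + 1)) = b := by
      rw [← Fin.succ_last, glue, Fin.cons_succ, Fin.snoc_last]
    rw [if_pos ⟨rfl, hlast⟩]
    exact hp _

theorem IsReciprocal.endMarg_div_eq {qref q : Traj X N → ℝ} (hR : IsReciprocal qref q)
    {a b : X} (hq : 0 < endMarg q a b) (hqref : endMarg qref a b ≠ 0) (v : Fin N → X)
    (hv : qref (glue a v b) ≠ 0) :
    endMarg q a b / endMarg qref a b = q (glue a v b) / qref (glue a v b) := by
  have h := hR a b hq v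
  rw [bridge, bridge, div_eq_div_iff hq.ne' hqref] at h
  rw [div_eq_div_iff hqref hv]
  linear_combination -h

theorem exists_pos_mul_eq_of_pos {α β : Type*} [Nonempty α] [Nonempty β] {F : α → β → ℝ}
    (hF : ∀ a b, 0 < F a b) {f : α → ℝ} {g : β → ℝ} (hfg : ∀ a b, F a b = f a * g b) :
    ∃ f' : α → ℝ, ∃ g' : β → ℝ, (∀ a, 0 < f' a) ∧ (∀ b, 0 < g' b) ∧
      ∀ a b, F a b = f' a * g' b := by
  have hne a b : f a * g b ≠ 0 := hfg a b ▸ (hF a b).ne'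
  refine ⟨fun a => |f a|, fun b => |g b|,
    fun a => abs_pos.2 (left_ne_zero_of_mul (hne a (Classical.arbitrary β))),
    fun b => abs_pos.2 (right_ne_zero_of_mul (hne (Classical.arbitrary α) b)), fun a b => ?_⟩
  rw [← abs_mul, ← hfg, abs_of_pos (hF a b)]

theorem schrodinger_potentials_general
    {X : Type*} [Fintype X] [DecidableEq X] [Nonempty X] {N : ℕ} (hN : 1 ≤ N)
    (qref : Traj X N → ℝ) (hqrefpos : ∀ ω, 0 < qref ω)
    (hqrefM : IsMarkov qref)
    (q : Traj X N → ℝ) (hqpos : ∀ ω, 0 < q ω)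
    (hqM : IsMarkov q) (hqR : IsReciprocal qref q) :
    ∃ ψ φ : X → ℝ, (∀ x, 0 < ψ x) ∧ (∀ x, 0 < φ x) ∧
      ∀ a b : X, endMarg q a b =
        ψ a * (endMarg qref a b / ∑ b' : X, endMarg qref a b') * φ b := by
  have hq_end a b := endMarg_pos_s11 hqpos a b
  have hqref_end a b := endMarg_pos_s11 hqrefpos a b
  obtain ⟨fq, gq, hq_eq⟩ := hqM.exists_glue_eq_mul hN
  obtain ⟨fr, gr, hqref_eq⟩ := hqrefM.exists_glue_eq_mul hN
  let v : Fin N → X := fun _ => Classical.arbitrary X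
  have hratio a b : endMarg q a b / endMarg qref a b = fq a v / fr a v * (gq v b / gr v b) := by
    rw [hqR.endMarg_div_eq (hq_end a b) (hqref_end a b).ne' v (hqrefpos _).ne', hq_eq, hqref_eq,
      div_mul_div_comm]
  obtain ⟨f, g, hf, hg, hfg⟩ :=
    exists_pos_mul_eq_of_pos (fun a b => div_pos (hq_end a b) (hqref_end a b)) hratio
  have hS a : 0 < ∑ b', endMarg qref a b' := sum_pos (fun b _ => hqref_end a b) univ_nonempty
  refine ⟨fun a => f a * ∑ b', endMarg qref a b', g, fun a => mul_pos (hf a) (hS a), hg,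
    fun a b => ?_⟩
  rw [← div_mul_cancel₀ (endMarg q a b) (hqref_end a b).ne', hfg a b]
  field_simp [(hS a).ne']

/-- Schrödinger system / fg-decomposition. If the full-support process
`q` is both Markov and reciprocal w.r.t. the full-support Markov reference `q^ref`, then
there exist strictly positive potentials `ψ, φ` with
`q(x_0, x_1) = ψ(x_0) · q^ref(x_1|x_0) · φ(x_1)`, where `q^ref(x_1|x_0)` is the conditional
of the endpoint marginal of `q^ref`. -/
theorem schrodinger_potentials
    {X : Type*} [Fintype X] [DecidableEq X] [Nonempty X] {N : ℕ} (hN : 1 ≤ N)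
    (qref : Traj X N → ℝ) (hqref : IsPMF qref) (hqrefpos : ∀ ω, 0 < qref ω)
    (hqrefM : IsMarkov qref)
    (q : Traj X N → ℝ) (hq : IsPMF q) (hqpos : ∀ ω, 0 < q ω)
    (hqM : IsMarkov q) (hqR : IsReciprocal qref q) :
    ∃ ψ φ : X → ℝ, (∀ x, 0 < ψ x) ∧ (∀ x, 0 < φ x) ∧
      ∀ a b : X, endMarg q a b =
        ψ a * (endMarg qref a b / ∑ b' : X, endMarg qref a b') * φ b :=
  schrodinger_potentials_general hN qref hqrefpos hqrefM q hqpos hqM hqR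
end

section
/- Let X be a nonempty finite set, N ≥ 1, let q^ref be a Markov process on X^{N+2} with full support, and let q be a process on X^{N+2} that is reciprocal with respect to q^ref. Then for every n ∈ {1, …, N+1} and all states y, z ∈ X, the joint distribution of q at the neighboring times t_{n-1} and t_n satisfies q(x_{t_{n-1}} = y, x_{t_n} = z) = Σ_{x_0, x_1 ∈ X} q(x_0, x_1) · q^ref(x_{t_{n-1}} = y | x_0, x_1) · q^ref(x_{t_n} = z | x_{t_{n-1}} = y, x_1) (with the conventions x_{t_0} := x_0 and x_{t_{N+1}} := x_1, under which the corresponding conditionals are point masses). -/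
open Finset

variable {X : Type*} [Fintype X] [DecidableEq X] {N : ℕ}

/-! A reciprocal `q` equals its reciprocal projection `q(x_0, x_1) · q^ref(x_in | x_0, x_1)`, so the
mass that `q` puts on `{x_0 = a, (x_{t_{n-1}}, x_{t_n}) = (y, z), x_1 = b}` is `q(a, b)` times the
corresponding probability under the `q^ref`-bridge from `a` to `b`. For the Markov `q^ref` this
probability factorizes at time `t_{n-1}`, because past and future are conditionally independent
given the present: exchanging the futures of two trajectories that agree at `t_{n-1}` preserves the
product of their `q^ref`-weights. -/

section Mass

variable {α : Type*} [Fintype α]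

def mass (q : α → ℝ) (P : α → Prop) [DecidablePred P] : ℝ :=
  ∑ x, if P x then q x else 0

variable {q : α → ℝ} {P Q : α → Prop} [DecidablePred P] [DecidablePred Q]

theorem mass_congr (h : ∀ x, P x ↔ Q x) : mass q P = mass q Q :=
  Finset.sum_congr rfl fun x _ => if_congr (h x) rfl rfl

theorem apply_le_mass (hq : ∀ x, 0 ≤ q x) {x : α} (hx : P x) : q x ≤ mass q P := by
  have := Finset.single_le_sum (f := fun x => if P x then q x else 0)
    (fun y _ => by split_ifs <;> simp [hq y]) (Finset.mem_univ x)
  simpa [mass, hx] using this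

theorem mass_nonneg (hq : ∀ x, 0 ≤ q x) : 0 ≤ mass q P :=
  Finset.sum_nonneg fun x _ => by split_ifs <;> simp [hq x]

theorem mass_mono (hq : ∀ x, 0 ≤ q x) (h : ∀ x, P x → Q x) : mass q P ≤ mass q Q :=
  Finset.sum_le_sum fun x _ => by
    by_cases hP : P x
    · simp [hP, h x hP]
    · by_cases hQ : Q x <;> simp [hP, hQ, hq x]

theorem mass_mul_mass {β : Type*} [Fintype β] (r : β → ℝ) (R : β → Prop) [DecidablePred R] :
    mass q P * mass r R = mass (fun p : α × β => q p.1 * r p.2) (fun p => P p.1 ∧ R p.2) := by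
  rw [mass, mass, Finset.sum_mul_sum, mass, Fintype.sum_prod_type]
  refine Finset.sum_congr rfl fun x _ => Finset.sum_congr rfl fun y _ => ?_
  by_cases hP : P x <;> by_cases hR : R y <;> simp [hP, hR]

theorem mass_eq_sum_sum {β γ : Type*} [Fintype β] [DecidableEq β] [Fintype γ] [DecidableEq γ]
    (f : α → β) (g : α → γ) :
    mass q P = ∑ b, ∑ c, mass q (fun x => f x = b ∧ P x ∧ g x = c) := by
  simp only [mass, ite_and]
  simp_rw [Finset.sum_comm (s := (Finset.univ : Finset γ)) (t := (Finset.univ : Finset α))]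
  rw [Finset.sum_comm]
  simp

end Mass

omit [Fintype X] [DecidableEq X] in
theorem piecewise_Iic_step {m : Fin (N + 2)} {u v : Traj X N} (h : u m = v m) (k : Fin (N + 1)) :
    ((Set.Iic m).piecewise u v k.castSucc, (Set.Iic m).piecewise u v k.succ) =
      if k.succ ≤ m then (u k.castSucc, u k.succ) else (v k.castSucc, v k.succ) := by
  by_cases hs : k.succ ≤ m
  · have hc : k.castSucc ≤ m := Fin.castSucc_lt_succ.le.trans hs
    simp [hs, hc]
  · by_cases hc : k.castSucc ≤ m
    · have hm : k.castSucc = m := le_antisymm hc (Fin.le_castSucc_iff.mpr (not_le.mp hs))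
      simp [hs, hm, h]
    · simp [hs, hc]

omit [Fintype X] [DecidableEq X] in
theorem prod_steps_piecewise_Iic_mul (T : Fin (N + 1) → X → X → ℝ) {m : Fin (N + 2)}
    {u v : Traj X N} (h : u m = v m) :
    (∏ k, T k ((Set.Iic m).piecewise u v k.castSucc) ((Set.Iic m).piecewise u v k.succ)) *
        ∏ k, T k ((Set.Iic m).piecewise v u k.castSucc) ((Set.Iic m).piecewise v u k.succ) =
      (∏ k, T k (u k.castSucc) (u k.succ)) * ∏ k, T k (v k.castSucc) (v k.succ) := by
  rw [← Finset.prod_mul_distrib, ← Finset.prod_mul_distrib]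
  refine Finset.prod_congr rfl fun k _ => ?_
  have huv := congrArg (fun p => T k p.1 p.2) (piecewise_Iic_step h k)
  have hvu := congrArg (fun p => T k p.1 p.2) (piecewise_Iic_step h.symm k)
  simp only at huv hvu
  rw [huv, hvu]
  split_ifs <;> ring

theorem IsMarkov.apply_piecewise_Iic_mul {q : Traj X N → ℝ} (hq : IsMarkov q) {m : Fin (N + 2)}
    {u v : Traj X N} (h : u m = v m) :
    q ((Set.Iic m).piecewise u v) * q ((Set.Iic m).piecewise v u) = q u * q v := by
  rw [hq ((Set.Iic m).piecewise u v), hq ((Set.Iic m).piecewise v u), hq u, hq v]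
  have h0 : (0 : Fin (N + 2)) ∈ Set.Iic m := Fin.zero_le m
  rw [Set.piecewise_eq_of_mem _ _ _ h0, Set.piecewise_eq_of_mem _ _ _ h0]
  linear_combination timeMarg q 0 (u 0) * timeMarg q 0 (v 0) *
    prod_steps_piecewise_Iic_mul (transP q) h

theorem IsMarkov.mass_mul_mass_swap_future {q : Traj X N → ℝ} (hq : IsMarkov q)
    (m : Fin (N + 2)) (y : X)
    {P F G : Traj X N → Prop} [DecidablePred P] [DecidablePred F] [DecidablePred G]
    (hP : DependsOn P (Set.Iic m)) (hF : DependsOn F (Set.Ioi m)) (hG : DependsOn G (Set.Ioi m)) :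
    mass q (fun ω => P ω ∧ ω m = y ∧ F ω) * mass q (fun ω => ω m = y ∧ G ω) =
      mass q (fun ω => P ω ∧ ω m = y ∧ G ω) * mass q (fun ω => ω m = y ∧ F ω) := by
  rw [mass_mul_mass, mass_mul_mass]
  let swap : Traj X N × Traj X N → Traj X N × Traj X N :=
    fun p => ((Set.Iic m).piecewise p.1 p.2, (Set.Iic m).piecewise p.2 p.1)
  have hswap : Function.Involutive swap := fun p => by
    ext i <;> by_cases hi : i ∈ Set.Iic m <;> simp [swap, hi]
  refine Fintype.sum_bijective swap hswap.bijective _ _ fun ⟨u, v⟩ => ?_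
  have past (u v : Traj X N) : P ((Set.Iic m).piecewise u v) = P u :=
    hP fun i hi => Set.piecewise_eq_of_mem _ _ _ hi
  have future {F : Traj X N → Prop} (hF : DependsOn F (Set.Ioi m)) (u v : Traj X N) :
      F ((Set.Iic m).piecewise u v) = F v :=
    hF fun i hi => Set.piecewise_eq_of_notMem _ _ _ (Set.notMem_Iic.mpr hi)
  have present (u v : Traj X N) : (Set.Iic m).piecewise u v m = u m :=
    Set.piecewise_eq_of_mem _ _ _ Set.self_mem_Iic
  simp only [swap, past, future hF, future hG, present]
  by_cases hc : (P u ∧ u m = y ∧ F u) ∧ v m = y ∧ G v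
  · rw [if_pos hc, if_pos (by tauto), hq.apply_piecewise_Iic_mul (hc.1.2.1.trans hc.2.1.symm)]
  · rw [if_neg hc, if_neg (by tauto)]

theorem IsMarkov.bridgeAt_mul_condTrans {q : Traj X N → ℝ} (hq : IsMarkov q)
    (hq0 : ∀ ω, 0 ≤ q ω) (n : Fin (N + 1)) (a y z b : X) :
    bridgeAt q n.castSucc y a b * condTrans q n y z b =
      mass q (fun ω => ω 0 = a ∧ (ω n.castSucc = y ∧ ω n.succ = z) ∧ ω (Fin.last (N + 1)) = b) /
        endMarg q a b := by
  have hind := hq.mass_mul_mass_swap_future n.castSucc y (P := fun ω => ω 0 = a)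
    (F := fun ω => ω n.succ = z ∧ ω (Fin.last (N + 1)) = b)
    (G := fun ω => ω (Fin.last (N + 1)) = b)
    (fun u v h => by dsimp only; rw [h 0 (Fin.zero_le _)])
    (fun u v h => by dsimp only; rw [h _ Fin.castSucc_lt_succ, h _ (Fin.castSucc_lt_last n)])
    (fun u v h => by dsimp only; rw [h _ (Fin.castSucc_lt_last n)])
  change mass q (fun ω => ω 0 = a ∧ ω n.castSucc = y ∧ ω (Fin.last (N + 1)) = b) / endMarg q a b *
    (mass q (fun ω => ω n.castSucc = y ∧ ω n.succ = z ∧ ω (Fin.last (N + 1)) = b) /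
      mass q (fun ω => ω n.castSucc = y ∧ ω (Fin.last (N + 1)) = b)) = _
  by_cases hD : mass q (fun ω => ω n.castSucc = y ∧ ω (Fin.last (N + 1)) = b) = 0
  · have hM : mass q (fun ω => ω 0 = a ∧ (ω n.castSucc = y ∧ ω n.succ = z) ∧
        ω (Fin.last (N + 1)) = b) = 0 :=
      le_antisymm (hD ▸ mass_mono hq0 fun ω h => ⟨h.2.1.1, h.2.2⟩) (mass_nonneg hq0)
    rw [hD, hM, div_zero, mul_zero, zero_div]
  · rw [div_mul_div_comm, ← hind, mul_div_mul_right _ _ hD]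
    exact congrArg (· / _) (mass_congr fun ω => (and_congr_right' and_assoc).symm)

omit [Fintype X] [DecidableEq X] in
theorem glue_init_tail (ω : Traj X N) :
    glue (ω 0) (Fin.init (Fin.tail ω)) (ω (Fin.last (N + 1))) = ω := by
  change Fin.cons (ω 0) (Fin.snoc (Fin.init (Fin.tail ω)) (Fin.tail ω (Fin.last N))) = ω
  rw [Fin.snoc_init_self, Fin.cons_self_tail]

theorem IsReciprocal.projR_eq {qref q : Traj X N → ℝ} (hR : IsReciprocal qref q)
    (hq : ∀ ω, 0 ≤ q ω) : projR qref q = q := by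
  funext ω
  rw [projR]
  by_cases h : endMarg q (ω 0) (ω (Fin.last (N + 1))) = 0
  · have hle : q ω ≤ endMarg q (ω 0) (ω (Fin.last (N + 1))) :=
      apply_le_mass (P := fun ω' => ω' 0 = ω 0 ∧ ω' (Fin.last (N + 1)) = ω (Fin.last (N + 1)))
        hq ⟨rfl, rfl⟩
    rw [h, mul_zero]
    exact (le_antisymm (h ▸ hle) (hq ω)).symm
  · have hb := hR _ _ (lt_of_le_of_ne (mass_nonneg hq) (Ne.symm h)) (Fin.init (Fin.tail ω))
    rw [bridge, bridge, glue_init_tail] at hb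
    rw [← hb, div_mul_cancel₀ _ h]

theorem IsReciprocal.mass_eq {qref q : Traj X N → ℝ} (hR : IsReciprocal qref q)
    (hq : ∀ ω, 0 ≤ q ω) {a b : X} {E : Traj X N → Prop} [DecidablePred E]
    (hE : ∀ ω, E ω → ω 0 = a ∧ ω (Fin.last (N + 1)) = b) :
    mass q E = endMarg q a b * (mass qref E / endMarg qref a b) := by
  conv_lhs => rw [← hR.projR_eq hq]
  rw [mass, mass, Finset.sum_div, Finset.mul_sum]
  refine Finset.sum_congr rfl fun ω _ => ?_
  split_ifs with h
  · obtain ⟨rfl, rfl⟩ := hE ω h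
    rw [projR]
    ring
  · simp

theorem reciprocal_pair_marginal_general
    {X : Type*} [Fintype X] [DecidableEq X] {N : ℕ}
    (qref : Traj X N → ℝ) (hqrefpos : ∀ ω, 0 < qref ω)
    (hqrefM : IsMarkov qref)
    (q : Traj X N → ℝ) (hq : IsPMF q) (hqR : IsReciprocal qref q) :
    ∀ (n : Fin (N + 1)) (y z : X),
      pairMarg q n y z =
        ∑ a : X, ∑ b : X, endMarg q a b *
          (bridgeAt qref n.castSucc y a b * condTrans qref n y z b) := by
  intro n y z
  calc pairMarg q n y z
      = ∑ a, ∑ b, mass q (fun ω => ω 0 = a ∧ (ω n.castSucc = y ∧ ω n.succ = z) ∧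
          ω (Fin.last (N + 1)) = b) :=
        mass_eq_sum_sum (q := q) (P := fun ω => ω n.castSucc = y ∧ ω n.succ = z) (fun ω => ω 0)
          (fun ω => ω (Fin.last (N + 1)))
    _ = _ := by
      refine Finset.sum_congr rfl fun a _ => Finset.sum_congr rfl fun b _ => ?_
      rw [hqR.mass_eq hq.1 fun ω h => ⟨h.1, h.2.2⟩,
        hqrefM.bridgeAt_mul_condTrans (fun ω => (hqrefpos ω).le)]

/-- Neighboring-time joint of a reciprocal process. For a process `q`
reciprocal w.r.t. the full-support Markov reference `q^ref`, for every transition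
`n ∈ {1, …, N+1}` and states `y, z`,
`q(x_{t_{n-1}} = y, x_{t_n} = z) = Σ_{x_0,x_1} q(x_0,x_1) · q^ref(x_{t_{n-1}} = y|x_0,x_1)
  · q^ref(x_{t_n} = z|x_{t_{n-1}} = y, x_1)` (with the conventions `x_{t_0} := x_0`,
`x_{t_{N+1}} := x_1`, under which the corresponding conditionals are point masses). -/
theorem reciprocal_pair_marginal
    {X : Type*} [Fintype X] [DecidableEq X] [Nonempty X] {N : ℕ} (hN : 1 ≤ N)
    (qref : Traj X N → ℝ) (hqref : IsPMF qref) (hqrefpos : ∀ ω, 0 < qref ω)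
    (hqrefM : IsMarkov qref)
    (q : Traj X N → ℝ) (hq : IsPMF q) (hqR : IsReciprocal qref q) :
    ∀ (n : Fin (N + 1)) (y z : X),
      pairMarg q n y z =
        ∑ a : X, ∑ b : X, endMarg q a b *
          (bridgeAt qref n.castSucc y a b * condTrans qref n y z b) :=
  reciprocal_pair_marginal_general qref hqrefpos hqrefM q hq hqR
end
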